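/- If m, n ≥ 2 and m + n is odd, then 4 ≤ aw(P_m □ P_n, 3); equivalently, there exists an exact 3-coloring of the grid P_m □ P_n containing no rainbow 3-AP. -/

import Mathlib

open SimpleGraph

/-- `v` lists the vertices of a `k`-term arithmetic progression in `G`:
consecutive vertices are at a common distance `d`. -/
def IsAPIn {V : Type*} (G : SimpleGraph V) (k : ℕ) (v : Fin k → V) : Prop :=
  ∃ d : ℕ, ∀ (i : ℕ) (h : i + 1 < k),
    G.dist (v ⟨i, by omega⟩) (v ⟨i + 1, h⟩) = d

/-- The coloring `c` admits a rainbow `k`-AP in `G`: a `k`-AP whose vertices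
are pairwise distinct and receive pairwise distinct colors. -/
def HasRainbowAP {V α : Type*} (G : SimpleGraph V) (k : ℕ) (c : V → α) : Prop :=
  ∃ v : Fin k → V, IsAPIn G k v ∧ Function.Injective (c ∘ v)

/-- The anti-van der Waerden number `aw(G,k)`: the least positive `r` such that
every exact `r`-coloring of `G` contains a rainbow `k`-AP.  (For `r = |V(G)|+1`
there is no surjection onto `r` colors, so the defining set is nonempty and
`aw(G,k) ≤ |V(G)|+1` automatically, matching the convention.) -/
noncomputable def aw {V : Type*} [Fintype V] (G : SimpleGraph V) (k : ℕ) : ℕ :=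
  sInf {r : ℕ | 0 < r ∧ ∀ c : V → Fin r, Function.Surjective c → HasRainbowAP G k c}

/-! Color the corner `0` of the grid with 1, the opposite corner with 2 and all other vertices
with 0; a rainbow 3-AP has to contain both corners. Every vertex lies on a geodesic between the
corners, so a vertex equidistant from them would make their distance `m + n - 2` even: the corners
are not the two ends of the AP. Nor are they consecutive terms, since the common difference would
then be the diameter `m + n - 2`, and the only vertex at that distance from a corner is the
opposite one. -/

namespace SimpleGraph

lemma natDist_le_length_of_pathGraph_walk {n : ℕ} {a b : Fin n} (w : (pathGraph n).Walk a b) :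
    Nat.dist a b ≤ w.length := by
  induction w with
  | nil => simp [Nat.dist_self]
  | @cons a c b hadj w ih =>
    have hstep : Nat.dist a c = 1 := by
      rw [pathGraph_adj] at hadj
      unfold Nat.dist
      omega
    calc Nat.dist a b ≤ Nat.dist a c + Nat.dist c b := Nat.dist.triangle_inequality _ _ _
      _ ≤ (w.cons hadj).length := by rw [Walk.length_cons, hstep]; omega

lemma dist_pathGraph_le_of_add_eq {n : ℕ} (a : Fin n) :
    ∀ (k : ℕ) (b : Fin n), a.val + k = b.val → (pathGraph n).dist a b ≤ k
  | 0, b, h => by simp [show a = b from Fin.ext (by omega)]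
  | k + 1, b, h => by
    let b' : Fin n := ⟨b - 1, by omega⟩
    have hadj : (pathGraph n).Adj b' b := pathGraph_adj.mpr (Or.inl (by simp [b']; omega))
    calc (pathGraph n).dist a b ≤ (pathGraph n).dist a b' + (pathGraph n).dist b' b :=
          hadj.reachable.dist_triangle_right a
      _ ≤ k + 1 := by
          rw [dist_eq_one_iff_adj.mpr hadj]
          have := dist_pathGraph_le_of_add_eq a k b' (by simp [b']; omega)
          omega

lemma dist_pathGraph {n : ℕ} (a b : Fin n) : (pathGraph n).dist a b = Nat.dist a b := by
  apply le_antisymm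
  · rcases le_total (a : ℕ) b with hab | hba
    · exact dist_pathGraph_le_of_add_eq a _ b (by rw [Nat.dist_eq_sub_of_le hab]; omega)
    · rw [dist_comm, Nat.dist_comm]
      exact dist_pathGraph_le_of_add_eq b _ a (by rw [Nat.dist_eq_sub_of_le hba]; omega)
  · obtain ⟨w, hw⟩ := (pathGraph_preconnected n a b).exists_walk_length_eq_dist
    exact hw ▸ natDist_le_length_of_pathGraph_walk w

lemma dist_boxProd {V W : Type*} {G : SimpleGraph V} {H : SimpleGraph W} (hG : G.Preconnected)
    (hH : H.Preconnected) (x y : V × W) :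
    (G □ H).dist x y = G.dist x.1 y.1 + H.dist x.2 y.2 := by
  rw [dist, dist, dist, edist_boxProd, ENat.toNat_add]
  · exact edist_ne_top_iff_reachable.mpr (hG _ _)
  · exact edist_ne_top_iff_reachable.mpr (hH _ _)

lemma dist_pathGraph_boxProd {m n : ℕ} (x y : Fin m × Fin n) :
    (pathGraph m □ pathGraph n).dist x y = Nat.dist x.1 y.1 + Nat.dist x.2 y.2 := by
  rw [dist_boxProd (pathGraph_preconnected m) (pathGraph_preconnected n), dist_pathGraph,
    dist_pathGraph]

end SimpleGraph

lemma HasRainbowAP.of_comp {V α β : Type*} {G : SimpleGraph V} {k : ℕ} {c : V → α} (f : α → β)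
    (h : HasRainbowAP G k (f ∘ c)) : HasRainbowAP G k c :=
  let ⟨v, hv, hinj⟩ := h
  ⟨v, hv, Function.Injective.of_comp (f := f) hinj⟩

lemma lt_aw_of_surjective_of_not_hasRainbowAP {V : Type*} [Fintype V] {G : SimpleGraph V}
    {k r : ℕ} {c : V → Fin r} (hc : Function.Surjective c) (hfree : ¬ HasRainbowAP G k c) :
    r < aw G k := by
  have hcard : Fintype.card V + 1 ∈
      {r : ℕ | 0 < r ∧ ∀ c : V → Fin r, Function.Surjective c → HasRainbowAP G k c} :=
    ⟨Nat.succ_pos _, fun c' hc' => by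
      simpa using (Fintype.card_le_of_surjective c' hc')⟩
  refine le_csInf ⟨_, hcard⟩ ?_
  rintro s ⟨hs, hall⟩
  by_contra! hsr
  -- merging the colors of `c` gives an exact `s`-coloring without rainbow APs
  have : Nonempty (Fin s) := ⟨⟨0, hs⟩⟩
  have hmerge := Function.invFun_surjective (Fin.castLE_injective (Nat.le_of_lt_succ hsr))
  exact hfree ((hall _ (hmerge.comp hc)).of_comp _)

section PairColoring

variable {V : Type*} [DecidableEq V]

def pairColoring (a b x : V) : Fin 3 :=
  if x = a then 1 else if x = b then 2 else 0

lemma pairColoring_eq_one_iff {a b x : V} : pairColoring a b x = 1 ↔ x = a := by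
  unfold pairColoring
  split_ifs <;> simp_all

lemma eq_of_pairColoring_eq_two {a b x : V} (h : pairColoring a b x = 2) : x = b := by
  unfold pairColoring at h
  split_ifs at h <;> simp_all

lemma pairColoring_surjective {a b : V} (hab : a ≠ b) {x : V} (hxa : x ≠ a) (hxb : x ≠ b) :
    Function.Surjective (pairColoring a b) := by
  intro i
  fin_cases i
  · exact ⟨x, by simp [pairColoring, hxa, hxb]⟩
  · exact ⟨a, by simp [pairColoring]⟩
  · exact ⟨b, by simp [pairColoring, hab.symm]⟩

-- A rainbow 3-AP passes through `a` and `b`: `hmid` keeps them from being its two ends, and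
-- `hfar_a`, `hfar_b` keep them from being consecutive terms.
theorem not_hasRainbowAP_pairColoring {G : SimpleGraph V} {a b : V}
    (hfar_a : ∀ x, G.dist a x = G.dist a b → x = b)
    (hfar_b : ∀ x, G.dist b x = G.dist a b → x = a)
    (hmid : ∀ x, G.dist a x ≠ G.dist x b) :
    ¬ HasRainbowAP G 3 (pairColoring a b) := by
  rintro ⟨v, ⟨d, hd⟩, hinj⟩
  have h01 : G.dist (v 0) (v 1) = d := hd 0 (by norm_num)
  have h12 : G.dist (v 1) (v 2) = d := hd 1 (by norm_num)
  have h10 : G.dist (v 1) (v 0) = d := dist_comm.trans h01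
  have h21 : G.dist (v 2) (v 1) = d := dist_comm.trans h12
  have hv : Function.Injective v := hinj.of_comp
  obtain ⟨i, hi⟩ := Finite.surjective_of_injective hinj 1
  obtain ⟨j, hj⟩ := Finite.surjective_of_injective hinj 2
  have hij : i ≠ j := by rintro rfl; exact absurd (hi.symm.trans hj) (by decide)
  replace hi := pairColoring_eq_one_iff.mp hi
  replace hj := eq_of_pairColoring_eq_two hj
  subst hi hj
  fin_cases i <;> fin_cases j <;> simp only [Fin.zero_eta, Fin.mk_one, Fin.reduceFinMk] at *
  · exact hij rfl
  · exact hv.ne (by decide) (hfar_b (v 2) (h12.trans h01.symm))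
  · exact hmid (v 1) (h01.trans h12.symm)
  · exact hv.ne (by decide) (hfar_a (v 2) (h12.trans h10.symm))
  · exact hij rfl
  · exact hv.ne (by decide) (hfar_a (v 0) (h10.trans h12.symm))
  · exact hmid (v 1) (h21.trans h10.symm)
  · exact hv.ne (by decide) (hfar_b (v 0) (h10.trans h21.symm))
  · exact hij rfl

end PairColoring

namespace SimpleGraph

variable {m n : ℕ} [NeZero m] [NeZero n]

lemma dist_pathGraph_boxProd_zero (x : Fin m × Fin n) :
    (pathGraph m □ pathGraph n).dist 0 x = x.1 + x.2 := by
  simp [dist_pathGraph_boxProd, Nat.dist_zero_left]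

lemma dist_pathGraph_boxProd_rev_zero (x : Fin m × Fin n) :
    (pathGraph m □ pathGraph n).dist (Fin.rev 0, Fin.rev 0) x =
      m - 1 - x.1 + (n - 1 - x.2) := by
  simp only [dist_pathGraph_boxProd, Fin.val_rev, Fin.val_zero, Nat.dist]
  omega

lemma dist_pathGraph_boxProd_zero_rev_zero :
    (pathGraph m □ pathGraph n).dist 0 (Fin.rev 0, Fin.rev 0) = m - 1 + (n - 1) := by
  simp [dist_pathGraph_boxProd_zero, Fin.val_rev]

lemma eq_rev_zero_of_dist_zero_eq {x : Fin m × Fin n}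
    (h : (pathGraph m □ pathGraph n).dist 0 x =
      (pathGraph m □ pathGraph n).dist 0 (Fin.rev 0, Fin.rev 0)) :
    x = (Fin.rev 0, Fin.rev 0) := by
  rw [dist_pathGraph_boxProd_zero, dist_pathGraph_boxProd_zero_rev_zero] at h
  ext <;> simp only [Fin.val_rev, Fin.val_zero] <;> omega

lemma eq_zero_of_dist_rev_zero_eq {x : Fin m × Fin n}
    (h : (pathGraph m □ pathGraph n).dist (Fin.rev 0, Fin.rev 0) x =
      (pathGraph m □ pathGraph n).dist 0 (Fin.rev 0, Fin.rev 0)) :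
    x = 0 := by
  rw [dist_pathGraph_boxProd_rev_zero, dist_pathGraph_boxProd_zero_rev_zero] at h
  ext <;> simp only [Prod.fst_zero, Prod.snd_zero, Fin.val_zero] <;> omega

lemma dist_zero_ne_dist_rev_zero (hodd : Odd (m + n)) (x : Fin m × Fin n) :
    (pathGraph m □ pathGraph n).dist 0 x ≠
      (pathGraph m □ pathGraph n).dist x (Fin.rev 0, Fin.rev 0) := by
  rw [dist_comm (u := x), dist_pathGraph_boxProd_zero, dist_pathGraph_boxProd_rev_zero]
  obtain ⟨k, hk⟩ := hodd
  omega

end SimpleGraph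

/-- if `m, n ≥ 2` and `m + n` is odd, then `4 ≤ aw(P_m □ P_n, 3)`;
equivalently there is an exact 3-coloring of the grid with no rainbow 3-AP. -/
theorem aw_ge_four_of_odd (m n : ℕ) (hm : 2 ≤ m) (hn : 2 ≤ n) (hodd : Odd (m + n)) :
    4 ≤ aw (pathGraph m □ pathGraph n) 3 ∧
    ∃ c : Fin m × Fin n → Fin 3, Function.Surjective c ∧
      ¬ HasRainbowAP (pathGraph m □ pathGraph n) 3 c := by
  have : NeZero m := ⟨by omega⟩
  have : NeZero n := ⟨by omega⟩
  have hsurj := pairColoring_surjective (a := (0 : Fin m × Fin n)) (b := (Fin.rev 0, Fin.rev 0))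
    (x := (⟨1, hm⟩, 0)) (by simp [Prod.ext_iff, Fin.ext_iff]; omega)
    (by simp [Prod.ext_iff]) (by simp [Prod.ext_iff, Fin.ext_iff]; omega)
  have hfree := not_hasRainbowAP_pairColoring (fun _ => eq_rev_zero_of_dist_zero_eq)
    (fun _ => eq_zero_of_dist_rev_zero_eq) (dist_zero_ne_dist_rev_zero hodd)
  exact ⟨lt_aw_of_surjective_of_not_hasRainbowAP hsurj hfree, _, hsurj, hfree⟩
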